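/- Every normal λ_CL-term is in parallel form: it is either a simply typed λ-term, or of the form u ∥_a v or u ∥ v where u and v are parallel forms. -/

import Mathlib

/-- Propositional formulas: atoms, ⊥, implication, conjunction. -/
inductive Formula : Type where
  | atom : Nat → Formula
  | bot  : Formula
  | imp  : Formula → Formula → Formula
  | conj : Formula → Formula → Formula
deriving DecidableEq

/-- A formula is prime if it is not a conjunction. -/
def Formula.IsPrime : Formula → Prop
  | .conj _ _ => False
  | _ => True

/-- Atomic formulas (atoms and ⊥). -/
def Formula.IsAtomic : Formula → Prop
  | .atom _ => True
  | .bot => True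
  | _ => False

/-- Subformula relation. -/
inductive Subformula : Formula → Formula → Prop where
  | refl (A : Formula) : Subformula A A
  | impL : Subformula A B → Subformula A (Formula.imp B C)
  | impR : Subformula A C → Subformula A (Formula.imp B C)
  | conjL : Subformula A B → Subformula A (Formula.conj B C)
  | conjR : Subformula A C → Subformula A (Formula.conj B C)

/-- Proper subformula: subformula and not equal. -/
def ProperSub (A B : Formula) : Prop := Subformula A B ∧ A ≠ B

/-- B is a strong subformula of A: a proper subformula of some prime
proper subformula of A. -/
def StrongSub (B A : Formula) : Prop :=
  ∃ P, Formula.IsPrime P ∧ ProperSub P A ∧ ProperSub B P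

/-- `ConjList A l` : A is the conjunction of the (nonempty) list of formulas l. -/
inductive ConjList : Formula → List Formula → Prop where
  | single (A : Formula) : ConjList A [A]
  | conj : ConjList A l → ConjList B m → ConjList (Formula.conj A B) (l ++ m)

/-- P is a prime factor of A: A is a conjunction of prime formulas among which P. -/
def PrimeFactor (P A : Formula) : Prop :=
  ∃ l, ConjList A l ∧ (∀ Q ∈ l, Formula.IsPrime Q) ∧ P ∈ l

/-- Number of symbols of a formula. -/
def Formula.size : Formula → Nat
  | .atom _ => 1
  | .bot => 1
  | .imp A B => A.size + B.size + 1
  | .conj A B => A.size + B.size + 1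

/-- The canonical list of prime factors of a formula. -/
def primeFactors : Formula → List Formula
  | .conj A B => primeFactors A ++ primeFactors B
  | A => [A]
/-- λ_CL terms (de Bruijn): simply typed λ-terms plus the parallel operators
`parC A u v` (u ∥ₐ v with communication kind A, binding channel variable 0,
of type ¬A in u and A in v) and `par u v` (u ∥ v). -/
inductive TermCL : Type where
  | var : Nat → TermCL
  | lam : Formula → TermCL → TermCL
  | app : TermCL → TermCL → TermCL
  | pair : TermCL → TermCL → TermCL
  | proj : Bool → TermCL → TermCL
  | efq : Formula → TermCL → TermCL
  | parC : Formula → TermCL → TermCL → TermCL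
  | par : TermCL → TermCL → TermCL
deriving DecidableEq

def liftF (f : Nat → Nat) : Nat → Nat
  | 0 => 0
  | n+1 => f n + 1

def TermCL.rename (f : Nat → Nat) : TermCL → TermCL
  | .var n => .var (f n)
  | .lam A t => .lam A (t.rename (liftF f))
  | .app t u => .app (t.rename f) (u.rename f)
  | .pair t u => .pair (t.rename f) (u.rename f)
  | .proj b t => .proj b (t.rename f)
  | .efq A t => .efq A (t.rename f)
  | .parC A u v => .parC A (u.rename (liftF f)) (v.rename (liftF f))
  | .par u v => .par (u.rename f) (v.rename f)

/-- Shift all free variables up by one. -/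
def liftT : TermCL → TermCL := TermCL.rename Nat.succ
/-- Shift all free variables except 0 up by one. -/
def liftU1 : TermCL → TermCL := TermCL.rename (liftF Nat.succ)
/-- Swap the variables 0 and 1. -/
def swap01 : TermCL → TermCL :=
  TermCL.rename (fun n => match n with | 0 => 1 | 1 => 0 | m => m)

/-- Substitution of `s` for variable `k` (variables above `k` shift down). -/
def TermCL.subst (k : Nat) (s : TermCL) : TermCL → TermCL
  | .var n => if n = k then s else if k < n then .var (n-1) else .var n
  | .lam A t => .lam A (TermCL.subst (k+1) (s.rename Nat.succ) t)
  | .app t u => .app (TermCL.subst k s t) (TermCL.subst k s u)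
  | .pair t u => .pair (TermCL.subst k s t) (TermCL.subst k s u)
  | .proj b t => .proj b (TermCL.subst k s t)
  | .efq A t => .efq A (TermCL.subst k s t)
  | .parC A u v => .parC A (TermCL.subst (k+1) (s.rename Nat.succ) u)
      (TermCL.subst (k+1) (s.rename Nat.succ) v)
  | .par u v => .par (TermCL.subst k s u) (TermCL.subst k s v)

def liftσ (σ : Nat → TermCL) : Nat → TermCL
  | 0 => .var 0
  | n+1 => (σ n).rename Nat.succ

/-- Simultaneous substitution. -/
def TermCL.msubst (σ : Nat → TermCL) : TermCL → TermCL
  | .var n => σ n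
  | .lam A t => .lam A (TermCL.msubst (liftσ σ) t)
  | .app t u => .app (TermCL.msubst σ t) (TermCL.msubst σ u)
  | .pair t u => .pair (TermCL.msubst σ t) (TermCL.msubst σ u)
  | .proj b t => .proj b (TermCL.msubst σ t)
  | .efq A t => .efq A (TermCL.msubst σ t)
  | .parC A u v => .parC A (TermCL.msubst (liftσ σ) u) (TermCL.msubst (liftσ σ) v)
  | .par u v => .par (TermCL.msubst σ u) (TermCL.msubst σ v)

/-- `freeInB n t = true` iff variable `n` occurs free in `t`. -/
def freeInB (n : Nat) : TermCL → Bool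
  | .var m => m == n
  | .lam _ t => freeInB (n+1) t
  | .app t u => freeInB n t || freeInB n u
  | .pair t u => freeInB n t || freeInB n u
  | .proj _ t => freeInB n t
  | .efq _ t => freeInB n t
  | .parC _ u v => freeInB (n+1) u || freeInB (n+1) v
  | .par u v => freeInB n u || freeInB n v

/-- Typing for λ_CL: intuitionistic rules, the excluded-middle rule (parC)
and contraction (par). -/
inductive TypingCL : List Formula → TermCL → Formula → Prop where
  | var : Γ[n]? = some A → TypingCL Γ (.var n) A
  | lam : TypingCL (A::Γ) t B → TypingCL Γ (.lam A t) (.imp A B)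
  | app : TypingCL Γ t (.imp A B) → TypingCL Γ u A → TypingCL Γ (.app t u) B
  | pair : TypingCL Γ t A → TypingCL Γ u B → TypingCL Γ (.pair t u) (.conj A B)
  | projL : TypingCL Γ t (.conj A B) → TypingCL Γ (.proj false t) A
  | projR : TypingCL Γ t (.conj A B) → TypingCL Γ (.proj true t) B
  | efq : P.IsAtomic → P ≠ .bot → TypingCL Γ t .bot → TypingCL Γ (.efq P t) P
  | parC : TypingCL (.imp A .bot :: Γ) u C → TypingCL (A :: Γ) v C →
      TypingCL Γ (.parC A u v) C
  | par : TypingCL Γ u A → TypingCL Γ v A → TypingCL Γ (.par u v) A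

/-- Terms without parallel operators, i.e. simply typed λ-terms. -/
def NoPar : TermCL → Prop
  | .var _ => True
  | .lam _ t => NoPar t
  | .app t u => NoPar t ∧ NoPar u
  | .pair t u => NoPar t ∧ NoPar u
  | .proj _ t => NoPar t
  | .efq _ t => NoPar t
  | .parC _ _ _ => False
  | .par _ _ => False

/-- Simple parallel terms: parallel compositions (by ∥) of simply typed λ-terms. -/
inductive SimpleParallel : TermCL → Prop where
  | base : NoPar t → SimpleParallel t
  | par : SimpleParallel u → SimpleParallel v → SimpleParallel (.par u v)

/-- Parallel forms: parallel compositions (by ∥ₐ and ∥) of simply typed λ-terms. -/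
inductive ParallelForm : TermCL → Prop where
  | base : NoPar t → ParallelForm t
  | parC : ParallelForm u → ParallelForm v → ParallelForm (.parC A u v)
  | par : ParallelForm u → ParallelForm v → ParallelForm (.par u v)

/-- One-hole contexts. -/
inductive Ctx : Type where
  | hole : Ctx
  | lam : Formula → Ctx → Ctx
  | appL : Ctx → TermCL → Ctx
  | appR : TermCL → Ctx → Ctx
  | pairL : Ctx → TermCL → Ctx
  | pairR : TermCL → Ctx → Ctx
  | proj : Bool → Ctx → Ctx
  | efq : Formula → Ctx → Ctx
  | parCL : Formula → Ctx → TermCL → Ctx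
  | parCR : Formula → TermCL → Ctx → Ctx
  | parL : Ctx → TermCL → Ctx
  | parR : TermCL → Ctx → Ctx

def Ctx.fill : Ctx → TermCL → TermCL
  | .hole, t => t
  | .lam A c, t => .lam A (c.fill t)
  | .appL c u, t => .app (c.fill t) u
  | .appR u c, t => .app u (c.fill t)
  | .pairL c u, t => .pair (c.fill t) u
  | .pairR u c, t => .pair u (c.fill t)
  | .proj b c, t => .proj b (c.fill t)
  | .efq A c, t => .efq A (c.fill t)
  | .parCL A c u, t => .parC A (c.fill t) u
  | .parCR A u c, t => .parC A u (c.fill t)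
  | .parL c u, t => .par (c.fill t) u
  | .parR u c, t => .par u (c.fill t)

/-- Types of the binders crossed by the hole, innermost first. -/
def Ctx.ext : Ctx → List Formula
  | .hole => []
  | .lam A c => c.ext ++ [A]
  | .appL c _ => c.ext
  | .appR _ c => c.ext
  | .pairL c _ => c.ext
  | .pairR _ c => c.ext
  | .proj _ c => c.ext
  | .efq _ c => c.ext
  | .parCL A c _ => c.ext ++ [Formula.imp A .bot]
  | .parCR A _ c => c.ext ++ [A]
  | .parL c _ => c.ext
  | .parR _ c => c.ext

/-- Number of binders above the hole. -/
def Ctx.depth (c : Ctx) : Nat := c.ext.length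

def Ctx.rename (f : Nat → Nat) : Ctx → Ctx
  | .hole => .hole
  | .lam A c => .lam A (c.rename (liftF f))
  | .appL c u => .appL (c.rename f) (u.rename f)
  | .appR u c => .appR (u.rename f) (c.rename f)
  | .pairL c u => .pairL (c.rename f) (u.rename f)
  | .pairR u c => .pairR (u.rename f) (c.rename f)
  | .proj b c => .proj b (c.rename f)
  | .efq A c => .efq A (c.rename f)
  | .parCL A c u => .parCL A (c.rename (liftF f)) (u.rename (liftF f))
  | .parCR A u c => .parCR A (u.rename (liftF f)) (c.rename (liftF f))
  | .parL c u => .parL (c.rename f) (u.rename f)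
  | .parR u c => .parR (u.rename f) (c.rename f)

/-- The variable `a` does not occur (free) to the right of the hole. -/
def NoVarRight (a : Nat) : Ctx → Prop
  | .hole => True
  | .lam _ c => NoVarRight (a+1) c
  | .appL c t => NoVarRight a c ∧ freeInB a t = false
  | .appR _ c => NoVarRight a c
  | .pairL c t => NoVarRight a c ∧ freeInB a t = false
  | .pairR _ c => NoVarRight a c
  | .proj _ c => NoVarRight a c
  | .efq _ c => NoVarRight a c
  | .parCL _ c t => NoVarRight (a+1) c ∧ freeInB (a+1) t = false
  | .parCR _ _ c => NoVarRight (a+1) c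
  | .parL c t => NoVarRight a c ∧ freeInB a t = false
  | .parR _ c => NoVarRight a c

open Classical in
/-- Communication complexity: total number of symbols of the prime factors of
the communication kind `B` that are neither proper subformulas of the term's
type `A` nor strong subformulas of the types `fvs` of its free variables. -/
noncomputable def commComplexity (fvs : List Formula) (A B : Formula) : Nat :=
  ((primeFactors B).filter fun P =>
      decide (¬ (ProperSub P A ∨ ∃ Ai ∈ fvs, StrongSub P Ai))).foldr
    (fun P n => P.size + n) 0

/-- The types of the free variables of `t` in context `Γ`. -/
def freeTypes (Γ : List Formula) (t : TermCL) : List Formula :=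
  (List.range Γ.length).filterMap fun n => if freeInB n t then Γ[n]? else none

/-- Iterated pairs ⟨t₁,...,tₙ⟩. -/
def tupleTerm : List TermCL → TermCL
  | [] => .var 0
  | [t] => t
  | t :: l => .pair t (tupleTerm l)

/-- Iterated conjunctions Y₁ ∧ (Y₂ ∧ ... ∧ Yₙ). -/
def tupleType : List Formula → Formula
  | [] => .bot
  | [A] => A
  | A :: l => .conj A (tupleType l)

/-- The i-th projection of a tuple of length `len`. -/
def projSel (i len : Nat) (t : TermCL) : TermCL :=
  if i + 1 = len then (TermCL.proj true)^[i] t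
  else .proj false ((TermCL.proj true)^[i] t)

/-- The multiple substitution `u^{b/ȳ}` (with `b` the channel variable 0):
variables in `ys` (the free variables of `u` bound in the context, all < k)
are replaced by the corresponding projections of `b`, the remaining free
variables (≥ k+1, the variable k being the channel ā, absent) are readdressed. -/
def crossσ (k : Nat) (ys : List Nat) : Nat → TermCL := fun n =>
  if n < k then projSel (List.idxOf n ys) ys.length (.var 0)
  else .var (n - k)

/-- Intuitionistic (β/projection) reduction on λ_CL terms. -/
inductive RedI : TermCL → TermCL → Prop where
  | beta : RedI (.app (.lam A t) u) (TermCL.subst 0 u t)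
  | projL : RedI (.proj false (.pair t u)) t
  | projR : RedI (.proj true (.pair t u)) u
  | lam : RedI t t' → RedI (.lam A t) (.lam A t')
  | appL : RedI t t' → RedI (.app t u) (.app t' u)
  | appR : RedI u u' → RedI (.app t u) (.app t u')
  | pairL : RedI t t' → RedI (.pair t u) (.pair t' u)
  | pairR : RedI u u' → RedI (.pair t u) (.pair t u')
  | proj : RedI t t' → RedI (.proj b t) (.proj b t')
  | efq : RedI t t' → RedI (.efq A t) (.efq A t')
  | parCL : RedI u u' → RedI (.parC A u v) (.parC A u' v)
  | parCR : RedI v v' → RedI (.parC A u v) (.parC A u v')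
  | parL : RedI u u' → RedI (.par u v) (.par u' v)
  | parR : RedI v v' → RedI (.par u v) (.par u v')

/-- Normality with respect to intuitionistic reductions. -/
def IntuNormal (t : TermCL) : Prop := ∀ u, ¬ RedI t u
/-- The reduction relation of λ_CL, indexed by the typing context `Γ` and the
type `A` of the term being reduced (needed for the communication-complexity
side conditions). Rules: intuitionistic reductions, permutation reductions,
basic cross reductions, cross reductions and simplifications, closed under
all term constructors. -/
inductive RedCL : List Formula → Formula → TermCL → TermCL → Prop where
  -- intuitionistic reductions
  | beta : RedCL Γ A (.app (.lam X t) u) (TermCL.subst 0 u t)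
  | projL : RedCL Γ A (.proj false (.pair t u)) t
  | projR : RedCL Γ A (.proj true (.pair t u)) u
  -- permutations pushing constructors inside ∥ₐ
  | appParC : RedCL Γ A (.app w (.parC X u v))
      (.parC X (.app (liftT w) u) (.app (liftT w) v))
  | parCApp : RedCL Γ A (.app (.parC X u v) w)
      (.parC X (.app u (liftT w)) (.app v (liftT w)))
  | parCProj : RedCL Γ A (.proj b (.parC X u v)) (.parC X (.proj b u) (.proj b v))
  | parCEfq : RedCL Γ A (.efq P (.parC X u v)) (.parC X (.efq P u) (.efq P v))
  | lamParC : RedCL Γ A (.lam Y (.parC X u v))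
      (.parC X (.lam Y (swap01 u)) (.lam Y (swap01 v)))
  | pairParCL : RedCL Γ A (.pair (.parC X u v) w)
      (.parC X (.pair u (liftT w)) (.pair v (liftT w)))
  | pairParCR : RedCL Γ A (.pair w (.parC X u v))
      (.parC X (.pair (liftT w) u) (.pair (liftT w) v))
  -- permutations pushing constructors inside ∥
  | appPar : RedCL Γ A (.app w (.par u v)) (.par (.app w u) (.app w v))
  | parApp : RedCL Γ A (.app (.par u v) w) (.par (.app u w) (.app v w))
  | parProj : RedCL Γ A (.proj b (.par u v)) (.par (.proj b u) (.proj b v))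
  | parEfq : RedCL Γ A (.efq P (.par u v)) (.par (.efq P u) (.efq P v))
  | lamPar : RedCL Γ A (.lam Y (.par u v)) (.par (.lam Y u) (.lam Y v))
  | pairParL : RedCL Γ A (.pair (.par u v) w) (.par (.pair u w) (.pair v w))
  | pairParR : RedCL Γ A (.pair w (.par u v)) (.par (.pair w u) (.pair w v))
  -- permutations between parallel operators (scope extrusion), subject to
  -- positive communication complexity of the outer channel
  | parCparCL :
      commComplexity (freeTypes Γ (.parC Y (.parC X u v) w)) A Y > 0 →
      RedCL Γ A (.parC Y (.parC X u v) w)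
        (.parC X (.parC Y (swap01 u) (liftU1 w)) (.parC Y (swap01 v) (liftU1 w)))
  | parCparCR :
      commComplexity (freeTypes Γ (.parC Y w (.parC X u v))) A Y > 0 →
      RedCL Γ A (.parC Y w (.parC X u v))
        (.parC X (.parC Y (liftU1 w) (swap01 u)) (.parC Y (liftU1 w) (swap01 v)))
  | parParCL :
      commComplexity (freeTypes Γ (.parC Y (.par u v) w)) A Y > 0 →
      RedCL Γ A (.parC Y (.par u v) w) (.par (.parC Y u w) (.parC Y v w))
  | parParCR :
      commComplexity (freeTypes Γ (.parC Y w (.par u v))) A Y > 0 →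
      RedCL Γ A (.parC Y w (.par u v)) (.par (.parC Y w u) (.parC Y w v))
  -- basic cross reduction  C[ā u] ∥ₐ D ↦ D[u/a]
  | basicCross : ∀ (C : Ctx) (u D : TermCL),
      (∀ n, n ≤ C.depth → freeInB n u = false) →
      commComplexity (freeTypes Γ (.parC B (C.fill (.app (.var C.depth) u)) D)) A B > 0 →
      RedCL Γ A (.parC B (C.fill (.app (.var C.depth) u)) D)
        (TermCL.subst 0 (u.rename (fun n => n - (C.depth + 1))) D)
  -- simplifications  u ∥ₐ v ↦ u (a ∉ u)  and  u ∥ₐ v ↦ v (a ∉ v)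
  | simpL : freeInB 0 u = false →
      RedCL Γ A (.parC B u v) (TermCL.subst 0 (.var 0) u)
  | simpR : freeInB 0 v = false →
      RedCL Γ A (.parC B u v) (TermCL.subst 0 (.var 0) v)
  -- cross reduction  C[ā u] ∥ₐ D ↦ (C[b̄⟨ȳ⟩] ∥ₐ D) ∥_b D[u^{b/ȳ}/a]
  | cross : ∀ (C : Ctx) (u D : TermCL) (ys : List Nat),
      ys = (List.range C.depth).filter (fun n => freeInB n u) →
      ys ≠ [] →
      freeInB C.depth u = false →
      SimpleParallel (C.fill (.app (.var C.depth) u)) →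
      IntuNormal (C.fill (.app (.var C.depth) u)) →
      NoVarRight 0 C →
      commComplexity (freeTypes Γ (.parC B (C.fill (.app (.var C.depth) u)) D)) A B > 0 →
      RedCL Γ A (.parC B (C.fill (.app (.var C.depth) u)) D)
        (.parC (tupleType (ys.map fun n => C.ext.getD n .bot))
          (.parC B
            ((C.rename (liftF Nat.succ)).fill
              (.app (.var (C.depth + 1)) (tupleTerm (ys.map TermCL.var))))
            (liftU1 D))
          (TermCL.subst 0 (u.msubst (crossσ C.depth ys)) (liftU1 D)))
  -- congruence rules
  | congLam : RedCL (X::Γ) Y t t' → RedCL Γ (.imp X Y) (.lam X t) (.lam X t')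
  | congAppL : TypingCL Γ t (.imp X Y) → RedCL Γ (.imp X Y) t t' →
      RedCL Γ Y (.app t u) (.app t' u)
  | congAppR : TypingCL Γ u X → RedCL Γ X u u' →
      RedCL Γ Y (.app t u) (.app t u')
  | congPairL : RedCL Γ X t t' → RedCL Γ (.conj X Y) (.pair t u) (.pair t' u)
  | congPairR : RedCL Γ Y u u' → RedCL Γ (.conj X Y) (.pair t u) (.pair t u')
  | congProj : TypingCL Γ t (.conj X Y) → RedCL Γ (.conj X Y) t t' →
      RedCL Γ Z (.proj b t) (.proj b t')
  | congEfq : RedCL Γ .bot t t' → RedCL Γ P (.efq P t) (.efq P t')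
  | congParCL : RedCL (.imp X .bot :: Γ) A u u' →
      RedCL Γ A (.parC X u v) (.parC X u' v)
  | congParCR : RedCL (X :: Γ) A v v' →
      RedCL Γ A (.parC X u v) (.parC X u v')
  | congParL : RedCL Γ A u u' → RedCL Γ A (.par u v) (.par u' v)
  | congParR : RedCL Γ A v v' → RedCL Γ A (.par u v) (.par u v')

/-! A permutation reduction pushes every intuitionistic constructor inside an immediate subterm
headed by `∥ₐ` or `∥`. In a normal term all immediate subterms of an intuitionistic constructor
are therefore free of parallel operators, and by induction on the typing derivation the only
parallel operators left are the outermost ones. -/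

def IsParallel : TermCL → Prop
  | .parC _ _ _ => True
  | .par _ _ => True
  | _ => False

theorem ParallelForm.noPar_of_not_isParallel {t : TermCL} (h : ParallelForm t)
    (hp : ¬ IsParallel t) : NoPar t := by
  cases h with
  | base h => exact h
  | parC => exact absurd trivial hp
  | par => exact absurd trivial hp

def IsNormal (Γ : List Formula) (A : Formula) (t : TermCL) : Prop :=
  ∀ u, ¬ RedCL Γ A t u

namespace IsNormal

variable {Γ : List Formula} {A P X Y : Formula} {b : Bool} {t u : TermCL}

theorem lam_body (h : IsNormal Γ (.imp X Y) (.lam X t)) : IsNormal (X :: Γ) Y t :=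
  fun _ hr => h _ (.congLam hr)

theorem app_left (ht : TypingCL Γ t (.imp X Y)) (h : IsNormal Γ Y (.app t u)) :
    IsNormal Γ (.imp X Y) t :=
  fun _ hr => h _ (.congAppL ht hr)

theorem app_right (hu : TypingCL Γ u X) (h : IsNormal Γ Y (.app t u)) : IsNormal Γ X u :=
  fun _ hr => h _ (.congAppR hu hr)

theorem pair_left (h : IsNormal Γ (.conj X Y) (.pair t u)) : IsNormal Γ X t :=
  fun _ hr => h _ (.congPairL hr)

theorem pair_right (h : IsNormal Γ (.conj X Y) (.pair t u)) : IsNormal Γ Y u :=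
  fun _ hr => h _ (.congPairR hr)

theorem proj (ht : TypingCL Γ t (.conj X Y)) (h : IsNormal Γ A (.proj b t)) :
    IsNormal Γ (.conj X Y) t :=
  fun _ hr => h _ (.congProj ht hr)

theorem efq (h : IsNormal Γ P (.efq P t)) : IsNormal Γ .bot t :=
  fun _ hr => h _ (.congEfq hr)

theorem parC_left (h : IsNormal Γ A (.parC X t u)) : IsNormal (.imp X .bot :: Γ) A t :=
  fun _ hr => h _ (.congParCL hr)

theorem parC_right (h : IsNormal Γ A (.parC X t u)) : IsNormal (X :: Γ) A u :=
  fun _ hr => h _ (.congParCR hr)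

theorem par_left (h : IsNormal Γ A (.par t u)) : IsNormal Γ A t :=
  fun _ hr => h _ (.congParL hr)

theorem par_right (h : IsNormal Γ A (.par t u)) : IsNormal Γ A u :=
  fun _ hr => h _ (.congParR hr)

theorem not_isParallel_lam_body (h : IsNormal Γ A (.lam X t)) : ¬ IsParallel t := by
  cases t with
  | parC => exact fun _ => h _ .lamParC
  | par => exact fun _ => h _ .lamPar
  | _ => exact id

theorem not_isParallel_app_left (h : IsNormal Γ A (.app t u)) : ¬ IsParallel t := by
  cases t with
  | parC => exact fun _ => h _ .parCApp
  | par => exact fun _ => h _ .parApp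
  | _ => exact id

theorem not_isParallel_app_right (h : IsNormal Γ A (.app t u)) : ¬ IsParallel u := by
  cases u with
  | parC => exact fun _ => h _ .appParC
  | par => exact fun _ => h _ .appPar
  | _ => exact id

theorem not_isParallel_pair_left (h : IsNormal Γ A (.pair t u)) : ¬ IsParallel t := by
  cases t with
  | parC => exact fun _ => h _ .pairParCL
  | par => exact fun _ => h _ .pairParL
  | _ => exact id

theorem not_isParallel_pair_right (h : IsNormal Γ A (.pair t u)) : ¬ IsParallel u := by
  cases u with
  | parC => exact fun _ => h _ .pairParCR
  | par => exact fun _ => h _ .pairParR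
  | _ => exact id

theorem not_isParallel_proj (h : IsNormal Γ A (.proj b t)) : ¬ IsParallel t := by
  cases t with
  | parC => exact fun _ => h _ .parCProj
  | par => exact fun _ => h _ .parProj
  | _ => exact id

theorem not_isParallel_efq (h : IsNormal Γ A (.efq P t)) : ¬ IsParallel t := by
  cases t with
  | parC => exact fun _ => h _ .parCEfq
  | par => exact fun _ => h _ .parEfq
  | _ => exact id

end IsNormal

/-- every normal λ_CL-term is in parallel form. -/
theorem normal_is_parallel_form (Γ : List Formula) (t : TermCL) (A : Formula)
    (ht : TypingCL Γ t A) (hnf : ∀ u, ¬ RedCL Γ A t u) :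
    ParallelForm t := by
  change IsNormal Γ A t at hnf
  induction ht with
  | var _ => exact .base trivial
  | lam _ ih =>
    exact .base ((ih hnf.lam_body).noPar_of_not_isParallel hnf.not_isParallel_lam_body)
  | app ht hu iht ihu =>
    exact .base ⟨(iht (hnf.app_left ht)).noPar_of_not_isParallel hnf.not_isParallel_app_left,
      (ihu (hnf.app_right hu)).noPar_of_not_isParallel hnf.not_isParallel_app_right⟩
  | pair _ _ iht ihu =>
    exact .base ⟨(iht hnf.pair_left).noPar_of_not_isParallel hnf.not_isParallel_pair_left,
      (ihu hnf.pair_right).noPar_of_not_isParallel hnf.not_isParallel_pair_right⟩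
  | projL ht iht | projR ht iht =>
    exact .base ((iht (hnf.proj ht)).noPar_of_not_isParallel hnf.not_isParallel_proj)
  | efq _ _ _ iht =>
    exact .base ((iht hnf.efq).noPar_of_not_isParallel hnf.not_isParallel_efq)
  | parC _ _ ihu ihv => exact .parC (ihu hnf.parC_left) (ihv hnf.parC_right)
  | par _ _ ihu ihv => exact .par (ihu hnf.par_left) (ihv hnf.par_right)
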